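/- arXiv:1201.3699 — 3 statements merged into one kernel-verified Lean document; each statement's English description precedes it below -/
import Mathlib

section
/- Let G be a graph, S ⊆ V(G) with |S| = k, and T a tree in G containing all vertices of S. If every edge of T lies in the induced subgraph G[S], then T uses exactly k−1 edges of E(G[S]) ∪ E_G[S, S̄]. If T contains at least one edge joining S to its complement S̄, then T uses at least k edges of E(G[S]) ∪ E_G[S, S̄]. -/
open SimpleGraph

/-- An `S`-Steiner tree in `G`: a subgraph of `G` that is a tree whose
vertex set contains `S`. -/
def SimpleGraph.IsSteinerTree {V : Type*} (G : SimpleGraph V) (S : Set V)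
    (T : G.Subgraph) : Prop :=
  S ⊆ T.verts ∧ T.coe.IsTree

/-- The generalized local edge-connectivity `λ(S)`: the maximum number of
pairwise edge-disjoint `S`-Steiner trees in `G`. -/
noncomputable def SimpleGraph.steinerLambda {V : Type*} (G : SimpleGraph V)
    (S : Set V) : ℕ :=
  sSup {n | ∃ T : Fin n → G.Subgraph, (∀ i, G.IsSteinerTree S (T i)) ∧
    ∀ i j, i ≠ j → Disjoint (T i).edgeSet (T j).edgeSet}

/-- The generalized `k`-edge-connectivity `λ_k(G)`:
the minimum of `λ(S)` over all `k`-element vertex subsets `S`. -/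
noncomputable def SimpleGraph.genEdgeConn {V : Type*} (G : SimpleGraph V)
    (k : ℕ) : ℕ :=
  sInf {m | ∃ S : Set V, S.ncard = k ∧ G.steinerLambda S = m}

/-!
If `T` leaves `S`, pick a vertex `w ∉ S` of `T`. Sending each `v ∈ S` to the first edge of a
shortest path in `T` from `v` to `w` is injective, because the other endpoint of that edge is
strictly closer to `w`. This gives `k` distinct edges meeting `S`. If instead every edge of `T`
lies in `G[S]`, then `S` is closed under adjacency in `T`, so `T` spans exactly `S` and, being a
tree, has `k - 1` edges.
-/

lemma Set.injOn_sym2_mk_of_lt {α : Type*} {s : Set α} {f : α → α} {d : α → ℕ}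
    (hf : ∀ v ∈ s, d (f v) < d v) : s.InjOn fun v ↦ s(v, f v) := by
  intro a ha b hb hab
  rcases Sym2.eq_iff.mp hab with ⟨hab, -⟩ | ⟨hafb, hfab⟩
  · exact hab
  · have ha' := hf a ha
    have hb' := hf b hb
    rw [hfab] at ha'
    rw [← hafb] at hb'
    omega

namespace SimpleGraph

variable {V : Type*} {G : SimpleGraph V}

lemma Walk.mem_of_adj_closed {s : Set V} (hs : ∀ ⦃u v⦄, G.Adj u v → u ∈ s → v ∈ s) {u v : V}
    (p : G.Walk u v) (hu : u ∈ s) : v ∈ s := by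
  induction p with
  | nil => exact hu
  | cons h _ ih => exact ih (hs h hu)

lemma Reachable.exists_adj_dist_lt {v r : V} (h : G.Reachable v r) (hv : v ≠ r) :
    ∃ u, G.Adj v u ∧ G.dist u r < G.dist v r := by
  obtain ⟨p, hp⟩ := h.exists_walk_length_eq_dist
  cases p with
  | nil => exact absurd rfl hv
  | cons h q =>
    refine ⟨_, h, ?_⟩
    have := dist_le q
    simp only [Walk.length_cons] at hp
    omega

lemma Preconnected.ncard_le_ncard_edges_meeting [Finite V] (hG : G.Preconnected) {r : V} {s : Set V}
    (hr : r ∉ s) : s.ncard ≤ {e ∈ G.edgeSet | ∃ v ∈ e, v ∈ s}.ncard := by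
  have hstep : ∀ v ∈ s, ∃ u, G.Adj v u ∧ G.dist u r < G.dist v r :=
    fun v hv ↦ (hG v r).exists_adj_dist_lt (ne_of_mem_of_not_mem hv hr)
  choose! f hadj hdist using hstep
  calc s.ncard = ((fun v ↦ s(v, f v)) '' s).ncard :=
        (Set.injOn_sym2_mk_of_lt (d := (G.dist · r)) hdist).ncard_image.symm
    _ ≤ _ := by
      refine Set.ncard_le_ncard ?_
      rintro _ ⟨v, hv, rfl⟩
      exact ⟨hadj v hv, v, Sym2.mem_mk_left _ _, hv⟩

namespace Subgraph

lemma ncard_coe_edges_meeting (T : G.Subgraph) (S : Set V) :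
    {e ∈ T.coe.edgeSet | ∃ v ∈ e, v ∈ Subtype.val ⁻¹' S}.ncard =
      {e ∈ T.edgeSet | ∃ v ∈ e, v ∈ S}.ncard := by
  rw [← Set.ncard_image_of_injective _ (Sym2.map.injective Subtype.val_injective)]
  congr 1
  ext e
  constructor
  · rintro ⟨e', ⟨he', v, hv, hvS⟩, rfl⟩
    exact ⟨by rwa [edgeSet_coe] at he', v, Sym2.mem_map.mpr ⟨v, hv, rfl⟩, hvS⟩
  · rintro ⟨he, v, hv, hvS⟩
    rw [← T.image_coe_edgeSet_coe] at he
    obtain ⟨e', he', rfl⟩ := he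
    obtain ⟨v', hv', rfl⟩ := Sym2.mem_map.mp hv
    exact ⟨e', ⟨he', v', hv', hvS⟩, rfl⟩

lemma ncard_edgeSet_add_one_of_isTree [Finite V] {T : G.Subgraph} (hT : T.coe.IsTree) :
    T.edgeSet.ncard + 1 = T.verts.ncard := by
  have := Fintype.ofFinite T.verts
  have := Fintype.ofFinite T.coe.edgeSet
  rw [← T.image_coe_edgeSet_coe, Set.ncard_image_of_injective _
    (Sym2.map.injective Subtype.val_injective), ← coe_edgeFinset, Set.ncard_coe_finset,
    hT.card_edgeFinset, Set.ncard_eq_toFinset_card', Set.toFinset_card]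

lemma verts_subset_of_forall_edge_mem {T : G.Subgraph} (hT : T.coe.Preconnected) {S : Set V}
    (hTS : ∀ e ∈ T.edgeSet, ∀ v ∈ e, v ∈ S) {s : V} (hs : s ∈ S) (hsT : s ∈ T.verts) :
    T.verts ⊆ S := by
  intro x hx
  obtain ⟨p⟩ := hT ⟨s, hsT⟩ ⟨x, hx⟩
  exact p.mem_of_adj_closed (s := Subtype.val ⁻¹' S)
    (fun u v huv _ ↦ hTS _ huv v (Sym2.mem_mk_right _ _)) hs

end Subgraph

end SimpleGraph

theorem steiner_tree_edge_count {V : Type*} [Fintype V] (G : SimpleGraph V)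
    (S : Set V) (k : ℕ) (hS : S.ncard = k) (T : G.Subgraph)
    (hT : G.IsSteinerTree S T) :
    ((∀ e ∈ T.edgeSet, ∀ v ∈ e, v ∈ S) →
      {e ∈ T.edgeSet | ∃ v ∈ e, v ∈ S}.ncard = k - 1) ∧
    ((∃ e ∈ T.edgeSet, ∃ v ∈ e, ∃ w ∈ e, v ∈ S ∧ w ∉ S) →
      k ≤ {e ∈ T.edgeSet | ∃ v ∈ e, v ∈ S}.ncard) := by
  obtain ⟨hST, hT⟩ := hT
  have hconn := hT.connected.preconnected
  constructor
  · intro hinside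
    have hfst : ∀ e ∈ T.edgeSet, e.out.1 ∈ S := fun e he ↦ hinside e he _ (Sym2.out_fst_mem e)
    rw [Set.sep_eq_self_iff_mem_true.mpr fun e he ↦ ⟨_, Sym2.out_fst_mem e, hfst e he⟩]
    rcases S.eq_empty_or_nonempty with rfl | ⟨s, hs⟩
    · have : T.edgeSet = ∅ := Set.eq_empty_of_forall_notMem fun e he ↦ hfst e he
      simp [this, ← hS]
    · have hverts : T.verts = S :=
        (T.verts_subset_of_forall_edge_mem hconn hinside hs (hST hs)).antisymm hST
      have hcount := T.ncard_edgeSet_add_one_of_isTree hT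
      rw [hverts, hS] at hcount
      omega
  · rintro ⟨e, he, -, -, w, hw, -, hwS⟩
    have hcount := hconn.ncard_le_ncard_edges_meeting
      (r := ⟨w, T.mem_verts_of_mem_edge he hw⟩) (s := Subtype.val ⁻¹' S) hwS
    rwa [T.ncard_coe_edges_meeting, Set.ncard_preimage_of_injective_subset_range
      Subtype.val_injective (by rwa [Subtype.range_coe]), hS] at hcount
end

section
/- Let G be a connected graph of order n ≥ 3 and ℓ a positive integer. If there exists S ⊆ V(G) with |S| = 3 such that the complement G̅ restricted to S induces no edges (i.e., G[S] = K_3) and the number of edges of G̅ with at least one endpoint in S is at least 3ℓ − 7, then λ_3(G) ≤ n − ℓ. -/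
open SimpleGraph

/-!
Let `T` be an `S`-Steiner tree, `S = {u, v, w}`. Each vertex of `S` lies on an edge of `T`, so at
least two edges of `T` meet `S`. If only two do, one of them joins two vertices of `S`, and the
edge of `T` leaving that pair must be the edge at the third vertex, so both edges lie inside `S`.
Hence `6 ≤ 2 * #(edges of T meeting S) + #(edges of T inside S)`. Summing over edge-disjoint
trees, which share the at most three edges inside `S`, `3 λ(S) ≤ #(edges of G meeting S) + 1`.
Finally, `G` and `Gᶜ` together have at most `3 + 3 (n - 3)` edges meeting `S`, and at least
`3ℓ - 7` of them lie in `Gᶜ`.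
-/

open scoped Function

section

variable {V : Type*}

theorem Set.sum_ncard_le_ncard_of_pairwise_disjoint {ι α : Type*} [Fintype ι] {s : ι → Set α}
    {t : Set α} (ht : t.Finite) (hs : Pairwise (Disjoint on s)) (hst : ∀ i, s i ⊆ t) :
    ∑ i, (s i).ncard ≤ t.ncard := by
  rw [← finsum_eq_sum_of_fintype, ← Set.ncard_iUnion_of_finite (fun i ↦ ht.subset (hst i)) hs]
  exact Set.ncard_le_ncard (Set.iUnion_subset hst) ht

def edgesMeeting (E : Set (Sym2 V)) (S : Set V) : Set (Sym2 V) := {e ∈ E | ∃ v ∈ e, v ∈ S}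

namespace SimpleGraph.Subgraph

variable {G : SimpleGraph V} {T : G.Subgraph} {S : Set V}

theorem exists_adj_mem_notMem (hT : T.coe.Preconnected) {X : Set V} {x y : V}
    (hxT : x ∈ T.verts) (hyT : y ∈ T.verts) (hx : x ∈ X) (hy : y ∉ X) : ∃ a b, T.Adj a b ∧ a ∈ X ∧ b ∉ X := by
  obtain ⟨p⟩ := hT ⟨x, hxT⟩ ⟨y, hyT⟩
  obtain ⟨d, -, hd⟩ := p.exists_boundary_dart (Subtype.val ⁻¹' X) hx hy
  exact ⟨d.fst, d.snd, d.adj, hd⟩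

theorem exists_mem_edgesMeeting (hT : T.coe.Preconnected) {x y : V} (hxT : x ∈ T.verts)
    (hyT : y ∈ T.verts) (hxy : x ≠ y) (hx : x ∈ S) : ∃ e ∈ edgesMeeting T.edgeSet S, x ∈ e := by
  obtain ⟨a, b, hab, rfl, -⟩ :=
    exists_adj_mem_notMem hT hxT hyT (Set.mem_singleton x) (Ne.symm hxy)
  exact ⟨s(a, b), ⟨hab, a, Sym2.mem_mk_left a b, hx⟩, Sym2.mem_mk_left a b⟩

theorem forall_exists_mem_edgesMeeting (hT : T.coe.Preconnected) (hST : S ⊆ T.verts)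
    (hS : 1 < S.ncard) : ∀ x ∈ S, ∃ e ∈ edgesMeeting T.edgeSet S, x ∈ e := by
  intro x hx
  obtain ⟨y, hy, hyx⟩ := Set.exists_ne_of_one_lt_ncard hS x
  exact exists_mem_edgesMeeting hT (hST hx) (hST hy) hyx.symm hx

variable [Finite V]

theorem edgesMeeting_subset_sym2_of_mem (hT : T.coe.Preconnected) (hST : S ⊆ T.verts)
    (hF : (edgesMeeting T.edgeSet S).ncard ≤ 2) {e : Sym2 V}
    (he : e ∈ edgesMeeting T.edgeSet S) (heS : e ∈ S.sym2) {r : V} (hr : r ∈ S) (hre : r ∉ e) :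
    edgesMeeting T.edgeSet S ⊆ S.sym2 := by
  have hpS : e.out.1 ∈ S := Set.mem_sym2_iff_subset.mp heS (Sym2.out_fst_mem e)
  have hpr : e.out.1 ≠ r := fun h ↦ hre (h ▸ Sym2.out_fst_mem e)
  obtain ⟨a, b, hab, ha, hb⟩ :=
    exists_adj_mem_notMem (X := {x | x ∈ e}) hT (hST hpS) (hST hr) (Sym2.out_fst_mem e) hre
  obtain ⟨er, her, hrer⟩ := exists_mem_edgesMeeting hT (hST hr) (hST hpS) hpr.symm hr
  have hf : s(a, b) ∈ edgesMeeting T.edgeSet S :=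
    ⟨hab, a, Sym2.mem_mk_left a b, Set.mem_sym2_iff_subset.mp heS ha⟩
  have hef : e ≠ s(a, b) := fun h ↦ hb (h ▸ Sym2.mem_mk_right a b)
  have hF2 : edgesMeeting T.edgeSet S = {e, s(a, b)} :=
    (Set.eq_of_subset_of_ncard_le (Set.pair_subset he hf) (by rwa [Set.ncard_pair hef])
      (Set.toFinite _)).symm
  -- the edge at `r` can only be `s(a, b)`, so `b = r`
  have hrb : r = b := by
    rw [hF2] at her
    rcases her with rfl | rfl
    · exact absurd hrer hre
    · exact (Sym2.mem_iff.mp hrer).resolve_left (by rintro rfl; exact hre ha)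
  rw [hF2]
  rintro _ (rfl | rfl)
  · exact heS
  · exact ⟨Set.mem_sym2_iff_subset.mp heS ha, hrb ▸ hr⟩

theorem two_le_ncard_edgesMeeting (hT : T.coe.Preconnected) (hST : S ⊆ T.verts)
    (hS : S.ncard = 3) : 2 ≤ (edgesMeeting T.edgeSet S).ncard := by
  have hcover := forall_exists_mem_edgesMeeting hT hST (by omega)
  obtain ⟨u, v, w, huv, huw, hvw, rfl⟩ := Set.ncard_eq_three.mp hS
  have hu : u ∈ ({u, v, w} : Set V) := by simp
  have hv : v ∈ ({u, v, w} : Set V) := by simp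
  have hw : w ∈ ({u, v, w} : Set V) := by simp
  obtain ⟨eu, heu, hueu⟩ := hcover u hu
  obtain ⟨ev, hev, hvev⟩ := hcover v hv
  obtain ⟨ew, hew, hwew⟩ := hcover w hw
  by_contra! h
  have hle := Nat.le_of_lt_succ h
  have heq : eu = s(u, v) := (Sym2.mem_and_mem_iff huv).mp
    ⟨hueu, (Set.ncard_le_one_iff (Set.toFinite _)).mp hle hev heu ▸ hvev⟩
  have hweu : w ∈ eu := (Set.ncard_le_one_iff (Set.toFinite _)).mp hle hew heu ▸ hwew
  rw [heq, Sym2.mem_iff] at hweu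
  exact hweu.elim (huw ·.symm) (hvw ·.symm)

theorem edgesMeeting_subset_sym2 (hT : T.coe.Preconnected) (hST : S ⊆ T.verts)
    (hS : S.ncard = 3) (hF : (edgesMeeting T.edgeSet S).ncard ≤ 2) :
    edgesMeeting T.edgeSet S ⊆ S.sym2 := by
  have key : ∀ {e x y z}, x ∈ S → y ∈ S → z ∈ S → x ≠ y → z ≠ x → z ≠ y →
      e ∈ edgesMeeting T.edgeSet S → x ∈ e → y ∈ e → edgesMeeting T.edgeSet S ⊆ S.sym2 := by
    intro e x y z hx hy hz hxy hzx hzy he hxe hye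
    obtain rfl := (Sym2.mem_and_mem_iff hxy).mp ⟨hxe, hye⟩
    exact edgesMeeting_subset_sym2_of_mem hT hST hF he ⟨hx, hy⟩ hz
      (by simp [Sym2.mem_iff, hzx, hzy])
  have hcover := forall_exists_mem_edgesMeeting hT hST (by omega)
  obtain ⟨u, v, w, huv, huw, hvw, rfl⟩ := Set.ncard_eq_three.mp hS
  have hu : u ∈ ({u, v, w} : Set V) := by simp
  have hv : v ∈ ({u, v, w} : Set V) := by simp
  have hw : w ∈ ({u, v, w} : Set V) := by simp
  obtain ⟨eu, heu, hueu⟩ := hcover u hu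
  obtain ⟨ev, hev, hvev⟩ := hcover v hv
  obtain ⟨ew, hew, hwew⟩ := hcover w hw
  by_cases h₁ : eu = ev
  · exact key hu hv hw huv huw.symm hvw.symm heu hueu (h₁ ▸ hvev)
  by_cases h₂ : eu = ew
  · exact key hu hw hv huw huv.symm hvw heu hueu (h₂ ▸ hwew)
  by_cases h₃ : ev = ew
  · exact key hv hw hu hvw huv huw hev hvev (h₃ ▸ hwew)
  have h3 : ({eu, ev, ew} : Set (Sym2 V)).ncard = 3 :=
    Set.ncard_eq_three.mpr ⟨eu, ev, ew, h₁, h₂, h₃, rfl⟩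
  have := Set.ncard_le_ncard (Set.insert_subset heu (Set.pair_subset hev hew)) (Set.toFinite _)
  omega

theorem six_le_two_mul_ncard_edgesMeeting_add (hT : T.coe.Preconnected) (hST : S ⊆ T.verts)
    (hS : S.ncard = 3) :
    6 ≤ 2 * (edgesMeeting T.edgeSet S).ncard + (T.edgeSet ∩ S.sym2).ncard := by
  have h2 := two_le_ncard_edgesMeeting hT hST hS
  by_cases hF : (edgesMeeting T.edgeSet S).ncard ≤ 2
  · have hsub : edgesMeeting T.edgeSet S ⊆ T.edgeSet ∩ S.sym2 :=
      fun e he ↦ ⟨he.1, edgesMeeting_subset_sym2 hT hST hS hF he⟩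
    have := Set.ncard_le_ncard hsub (Set.toFinite _)
    omega
  · omega

end SimpleGraph.Subgraph

namespace SimpleGraph

theorem ncard_edgeSet_inter_sym2_le [Finite V] (G : SimpleGraph V) (S : Set V) :
    (G.edgeSet ∩ S.sym2).ncard ≤ S.ncard.choose 2 := by
  classical
  have := Fintype.ofFinite V
  calc (G.edgeSet ∩ S.sym2).ncard
      ≤ (↑(S.toFinset.offDiag.image Sym2.mk.uncurry) : Set (Sym2 V)).ncard := by
        refine Set.ncard_le_ncard ?_ (Finset.finite_toSet _)
        rintro e ⟨he, heS⟩
        induction e using Sym2.ind with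
        | _ x y => simpa using ⟨x, y, ⟨heS.1, heS.2, G.ne_of_adj he⟩, Or.inl ⟨rfl, rfl⟩⟩
    _ = S.ncard.choose 2 := by
        rw [Set.ncard_coe_finset, Sym2.card_image_offDiag, Set.ncard_eq_toFinset_card']

theorem ncard_edgesMeeting_add_ncard_edgesMeeting_compl [Finite V] (G : SimpleGraph V)
    (S : Set V) : (edgesMeeting G.edgeSet S).ncard + (edgesMeeting Gᶜ.edgeSet S).ncard =
      (edgesMeeting (⊤ : SimpleGraph V).edgeSet S).ncard := by
  rw [← Set.ncard_union_eq _ (Set.toFinite _) (Set.toFinite _), ← sup_compl_eq_top (x := G),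
    edgeSet_sup]
  · exact congrArg Set.ncard Set.sep_union.symm
  exact ((disjoint_edgeSet.mpr disjoint_compl_right).mono (Set.sep_subset _ _)
    (Set.sep_subset _ _))

theorem ncard_edgesMeeting_top_le [Finite V] (S : Set V) :
    (edgesMeeting (⊤ : SimpleGraph V).edgeSet S).ncard ≤
      S.ncard.choose 2 + S.ncard * Sᶜ.ncard := by
  have hsub : edgesMeeting (⊤ : SimpleGraph V).edgeSet S ⊆
      ((⊤ : SimpleGraph V).edgeSet ∩ S.sym2) ∪ Sym2.mk.uncurry '' (S ×ˢ Sᶜ) := by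
    rintro e ⟨he, x, hxe, hxS⟩
    obtain ⟨y, rfl⟩ := Sym2.mem_iff_exists.mp hxe
    by_cases hyS : y ∈ S
    · exact Or.inl ⟨he, hxS, hyS⟩
    · exact Or.inr ⟨(x, y), ⟨hxS, hyS⟩, rfl⟩
  calc _ ≤ _ := Set.ncard_le_ncard hsub (Set.toFinite _)
    _ ≤ _ := Set.ncard_union_le _ _
    _ ≤ _ := add_le_add (ncard_edgeSet_inter_sym2_le ⊤ S)
        ((Set.ncard_image_le (Set.toFinite _)).trans Set.ncard_prod.le)

theorem steinerLambda_le {G : SimpleGraph V} {S : Set V} {m : ℕ}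
    (h : ∀ t (T : Fin t → G.Subgraph), (∀ i, G.IsSteinerTree S (T i)) →
      Pairwise (Disjoint on fun i ↦ (T i).edgeSet) → t ≤ m) :
    G.steinerLambda S ≤ m :=
  csSup_le ⟨0, Fin.elim0, fun i ↦ i.elim0, fun i ↦ i.elim0⟩
    fun t ⟨T, hT, hdisj⟩ ↦ h t T hT fun i j hij ↦ hdisj i j hij

theorem genEdgeConn_le_steinerLambda (G : SimpleGraph V) {k : ℕ} {S : Set V}
    (hS : S.ncard = k) : G.genEdgeConn k ≤ G.steinerLambda S :=
  Nat.sInf_le ⟨S, hS, rfl⟩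

theorem three_mul_le_ncard_edgesMeeting_add_one [Finite V] {G : SimpleGraph V} {S : Set V}
    (hS : S.ncard = 3) {t : ℕ} {T : Fin t → G.Subgraph} (hT : ∀ i, G.IsSteinerTree S (T i))
    (hdisj : Pairwise (Disjoint on fun i ↦ (T i).edgeSet)) :
    3 * t ≤ (edgesMeeting G.edgeSet S).ncard + 1 := by
  have hsix : ∑ _i : Fin t, 6 ≤ ∑ i, (2 * (edgesMeeting (T i).edgeSet S).ncard +
      ((T i).edgeSet ∩ S.sym2).ncard) := Finset.sum_le_sum fun i _ ↦
    Subgraph.six_le_two_mul_ncard_edgesMeeting_add (hT i).2.connected.preconnected (hT i).1 hS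
  have hmeet : ∑ i, (edgesMeeting (T i).edgeSet S).ncard ≤ (edgesMeeting G.edgeSet S).ncard :=
    Set.sum_ncard_le_ncard_of_pairwise_disjoint (Set.toFinite _)
      (fun i j hij ↦ (hdisj hij).mono (Set.sep_subset _ _) (Set.sep_subset _ _))
      fun i _ he ↦ ⟨(T i).edgeSet_subset he.1, he.2⟩
  have hinside : ∑ i, ((T i).edgeSet ∩ S.sym2).ncard ≤ 3 :=
    (Set.sum_ncard_le_ncard_of_pairwise_disjoint (Set.toFinite (G.edgeSet ∩ S.sym2))
      (fun i j hij ↦ (hdisj hij).mono Set.inter_subset_left Set.inter_subset_left)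
      fun i ↦ Set.inter_subset_inter_left _ (T i).edgeSet_subset).trans
    (by simpa [hS] using G.ncard_edgeSet_inter_sym2_le S)
  rw [Finset.sum_add_distrib, ← Finset.mul_sum, Finset.sum_const, Finset.card_univ,
    Fintype.card_fin, smul_eq_mul] at hsix
  omega

end SimpleGraph

end

theorem lambda_three_upper_bound_clique_case_general {V : Type*} [Fintype V]
    (G : SimpleGraph V) (n ℓ : ℕ) (hn : Fintype.card V = n) (S : Set V) (hS : S.ncard = 3)
    (hcnt : 3 * ℓ - 7 ≤ {e ∈ Gᶜ.edgeSet | ∃ v ∈ e, v ∈ S}.ncard) :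
    G.genEdgeConn 3 ≤ n - ℓ := by
  have hcompl : S.ncard + Sᶜ.ncard = n := by
    rw [Set.ncard_add_ncard_compl, Nat.card_eq_fintype_card, hn]
  have hedges := G.ncard_edgesMeeting_add_ncard_edgesMeeting_compl S ▸ ncard_edgesMeeting_top_le S
  rw [hS, show Nat.choose 3 2 = 3 from rfl] at hedges
  rw [hS] at hcompl
  have hcnt' : 3 * ℓ - 7 ≤ (edgesMeeting Gᶜ.edgeSet S).ncard := hcnt
  refine (G.genEdgeConn_le_steinerLambda hS).trans (steinerLambda_le fun t T hT hdisj ↦ ?_)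
  have := three_mul_le_ncard_edgesMeeting_add_one hS hT hdisj
  omega

theorem lambda_three_upper_bound_clique_case {V : Type*} [Fintype V]
    (G : SimpleGraph V) (n ℓ : ℕ) (hn : Fintype.card V = n) (h3 : 3 ≤ n)
    (hl : 1 ≤ ℓ) (hG : G.Connected) (S : Set V) (hS : S.ncard = 3)
    (hclique : ∀ u ∈ S, ∀ v ∈ S, u ≠ v → G.Adj u v)
    (hcnt : 3 * ℓ - 7 ≤ {e ∈ Gᶜ.edgeSet | ∃ v ∈ e, v ∈ S}.ncard) :
    G.genEdgeConn 3 ≤ n - ℓ :=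
  lambda_three_upper_bound_clique_case_general G n ℓ hn S hS hcnt
end

section
/- For the complete bipartite graph K_{ℓ,ℓ+1} with ℓ ≥ 2, λ_3(K_{ℓ,ℓ+1}) = ℓ; that is, for every 3-element subset S of vertices of K_{ℓ,ℓ+1} there exist ℓ pairwise edge-disjoint trees each containing S, and some 3-subset admits no more than ℓ. -/
open SimpleGraph

/-!
For `|S| ≥ 2`, every tree containing `S` has an edge at each vertex of `S`, and edge-disjoint
trees use different edges, so `λ(S)` is at most the degree of any vertex of `S`; for three
vertices of the larger side that degree is `ℓ`. Conversely every 3-set `S` carries `ℓ`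
edge-disjoint trees, each a star, possibly with one pendant edge: if `S` lies on one side, take
the stars with leaves `S` centred at the vertices of the other side; if `S = {a₁, a₂, b}` with `b`
on the larger side, pair each left vertex `x` with its own right vertex `c_x ≠ b` and take the
star at `c_x` on `a₁, a₂, x` plus the edge `x b`; if `S = {a, b₁, b₂}`, take the star at `a` on
`b₁, b₂` together with, for each of the other `ℓ - 1` left vertices `x`, the star at `x` on
`b₁, b₂, c_x` plus the edge `c_x a`, where the `c_x` are the `ℓ - 1` right vertices other than
`b₁, b₂`.
-/

namespace SimpleGraph

variable {V : Type*} {G : SimpleGraph V} {S : Set V}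

def starSubgraph (G : SimpleGraph V) (c : V) (s : Set V) : G.Subgraph where
  verts := insert c s
  Adj a b := G.Adj a b ∧ (a = c ∧ b ∈ s ∨ b = c ∧ a ∈ s)
  adj_sub h := h.1
  edge_vert := by rintro a b ⟨-, ⟨rfl, -⟩ | ⟨-, ha⟩⟩ <;> simp [*]
  symm := ⟨fun _ _ h ↦ ⟨h.1.symm, h.2.symm⟩⟩

@[simp]
lemma starSubgraph_verts (c : V) (s : Set V) : (G.starSubgraph c s).verts = insert c s := rfl

@[simp]
lemma starSubgraph_adj {c a b : V} {s : Set V} :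
    (G.starSubgraph c s).Adj a b ↔ G.Adj a b ∧ (a = c ∧ b ∈ s ∨ b = c ∧ a ∈ s) := Iff.rfl

lemma isTree_coe_starSubgraph {c : V} {s : Set V} (h : s ⊆ G.neighborSet c) :
    (G.starSubgraph c s).coe.IsTree := by
  convert isTree_starGraph (⟨c, Set.mem_insert c s⟩ : (G.starSubgraph c s).verts)
  ext ⟨a, ha⟩ ⟨b, hb⟩
  simp only [starSubgraph_verts, Set.mem_insert_iff] at ha hb
  have := @h a
  have := @h b
  simp only [Subgraph.coe_adj, starSubgraph_adj, starGraph_adj, ne_eq]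
  grind [mem_neighborSet, Adj.ne, Adj.symm]

lemma disjoint_edgeSet_starSubgraph {c c' : V} {s s' : Set V} (hcc' : c ≠ c') (hc : c ∉ s')
    (hc' : c' ∉ s) : Disjoint (G.starSubgraph c s).edgeSet (G.starSubgraph c' s').edgeSet := by
  rw [Set.disjoint_left]
  rintro ⟨a, b⟩ h h'
  simp only [Subgraph.mem_edgeSet, starSubgraph_adj] at h h'
  grind

lemma Subgraph.natCard_edgeSet_coe (H : G.Subgraph) :
    Nat.card H.coe.edgeSet = H.edgeSet.ncard := by
  rw [← H.image_coe_edgeSet_coe,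
    Set.ncard_image_of_injective _ (Sym2.map.injective Subtype.val_injective)]
  rfl

lemma Subgraph.isTree_coe_sup_subgraphOfAdj [Finite V] {T : G.Subgraph} (hT : T.coe.IsTree)
    {v w : V} (hvw : G.Adj v w) (hv : v ∈ T.verts) (hw : w ∉ T.verts) :
    (T ⊔ G.subgraphOfAdj hvw).coe.IsTree := by
  rw [isTree_iff_connected_and_card, natCard_edgeSet_coe, Nat.card_coe_set_eq] at hT ⊢
  refine ⟨Subgraph.connected_iff'.mp (Subgraph.connected_sup
    (Subgraph.connected_iff'.mpr hT.1).preconnected (subgraphOfAdj_connected hvw).preconnected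
    ⟨v, hv, by simp⟩), ?_⟩
  have hverts : (T ⊔ G.subgraphOfAdj hvw).verts = insert w T.verts := by
    ext
    simp only [Subgraph.verts_sup, subgraphOfAdj_verts, Set.mem_union, Set.mem_insert_iff,
      Set.mem_singleton_iff]
    grind
  have hedges : (T ⊔ G.subgraphOfAdj hvw).edgeSet = insert s(v, w) T.edgeSet := by
    rw [Subgraph.edgeSet_sup, edgeSet_subgraphOfAdj, Set.union_singleton]
  have hvw' : s(v, w) ∉ T.edgeSet :=
    fun h ↦ hw (T.mem_verts_of_mem_edge h (Sym2.mem_mk_right v w))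
  rw [hedges, Set.ncard_insert_of_notMem hvw', hverts, Set.ncard_insert_of_notMem hw, ← hT.2]

lemma Subgraph.disjoint_edgeSet_sup_subgraphOfAdj {H H' : G.Subgraph} {x y x' y' : V}
    (h : G.Adj x y) (h' : G.Adj x' y') (hH : Disjoint H.edgeSet H'.edgeSet)
    (he : s(x, y) ∉ H'.edgeSet) (he' : s(x', y') ∉ H.edgeSet) (hne : s(x, y) ≠ s(x', y')) :
    Disjoint (H ⊔ G.subgraphOfAdj h).edgeSet (H' ⊔ G.subgraphOfAdj h').edgeSet := by
  simp only [Subgraph.edgeSet_sup, edgeSet_subgraphOfAdj, Set.disjoint_union_left,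
    Set.disjoint_union_right]
  exact ⟨⟨hH, Set.disjoint_singleton_left.mpr he⟩, Set.disjoint_singleton_right.mpr he',
    Set.disjoint_singleton.mpr hne⟩

lemma IsSteinerTree.exists_adj {T : G.Subgraph} (hT : G.IsSteinerTree S T) {u v : V}
    (hu : u ∈ S) (hv : v ∈ S) (huv : u ≠ v) : ∃ w, T.Adj u w := by
  obtain ⟨p⟩ := hT.2.connected ⟨u, hT.1 hu⟩ ⟨v, hT.1 hv⟩
  have hp : ¬ p.Nil := Walk.not_nil_of_ne (by simpa using huv)
  exact ⟨p.snd, (Subgraph.coe_adj _ _ _).mp (p.adj_snd hp)⟩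

section Packing

variable {ι : Type*} [Fintype ι] {T : ι → G.Subgraph}

lemma card_le_degree_of_isSteinerTree (hT : ∀ i, G.IsSteinerTree S (T i))
    (hdisj : ∀ i j, i ≠ j → Disjoint (T i).edgeSet (T j).edgeSet)
    {v : V} [Fintype (G.neighborSet v)] (hv : v ∈ S) (hS : S.Nontrivial) :
    Fintype.card ι ≤ G.degree v := by
  obtain ⟨u, hu, huv⟩ := hS.exists_ne v
  choose w hw using fun i ↦ (hT i).exists_adj hv hu huv.symm
  have hinj : Function.Injective fun i ↦ (⟨w i, (T i).adj_sub (hw i)⟩ : G.neighborSet v) := by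
    intro i j hij
    by_contra hne
    have hj : s(v, w i) ∈ (T j).edgeSet := by
      rw [show w i = w j from congrArg Subtype.val hij]
      exact hw j
    exact Set.disjoint_left.mp (hdisj i j hne) (hw i) hj
  rw [← card_neighborSet_eq_degree]
  exact Fintype.card_le_of_injective _ hinj

lemma card_le_steinerLambda [G.LocallyFinite] (hT : ∀ i, G.IsSteinerTree S (T i))
    (hdisj : ∀ i j, i ≠ j → Disjoint (T i).edgeSet (T j).edgeSet) (hS : S.Nontrivial) :
    Fintype.card ι ≤ G.steinerLambda S := by
  obtain ⟨v, hv⟩ := hS.nonempty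
  let e := Fintype.equivFin ι
  refine le_csSup ⟨G.degree v, ?_⟩
    ⟨T ∘ e.symm, fun i ↦ hT _, fun i j hij ↦ hdisj _ _ (by simpa using hij)⟩
  rintro n ⟨T, hT, hdisj⟩
  simpa using card_le_degree_of_isSteinerTree hT hdisj hv hS

end Packing

lemma steinerLambda_le_degree {v : V} [Fintype (G.neighborSet v)] (hv : v ∈ S)
    (hS : S.Nontrivial) : G.steinerLambda S ≤ G.degree v := by
  refine csSup_le ⟨0, Fin.elim0, fun i ↦ i.elim0, fun i ↦ i.elim0⟩ ?_
  rintro n ⟨T, hT, hdisj⟩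
  simpa using card_le_degree_of_isSteinerTree hT hdisj hv hS

lemma card_le_steinerLambda_of_subset_neighborSet [G.LocallyFinite] {ι : Type*} [Fintype ι]
    {c : ι → V} (hc : Function.Injective c) (hSc : ∀ i, S ⊆ G.neighborSet (c i))
    (hS : S.Nontrivial) : Fintype.card ι ≤ G.steinerLambda S := by
  have hcS : ∀ i, c i ∉ S := fun i h ↦ G.irrefl (hSc i h)
  exact card_le_steinerLambda (T := fun i ↦ G.starSubgraph (c i) S)
    (fun i ↦ ⟨Set.subset_insert _ _, isTree_coe_starSubgraph (hSc i)⟩)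
    (fun i j hij ↦ disjoint_edgeSet_starSubgraph (hc.ne hij) (hcS i) (hcS j)) hS

lemma genEdgeConn_eq {k n : ℕ} {S₀ : Set V} (hS₀ : S₀.ncard = k) (hle : G.steinerLambda S₀ ≤ n)
    (hge : ∀ S : Set V, S.ncard = k → n ≤ G.steinerLambda S) : G.genEdgeConn k = n := by
  unfold genEdgeConn
  apply le_antisymm
  · exact le_trans (Nat.sInf_le ⟨S₀, hS₀, rfl⟩) hle
  · refine le_csInf ⟨G.steinerLambda S₀, S₀, hS₀, rfl⟩ ?_
    rintro _ ⟨S, hS, rfl⟩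
    exact hge S hS

end SimpleGraph

open Sum

lemma completeBipartiteGraph_degree_inr {α β : Type*} [Fintype α] (b : β)
    [Fintype ((completeBipartiteGraph α β).neighborSet (inr b))] :
    (completeBipartiteGraph α β).degree (inr b) = Fintype.card α := by
  have : (completeBipartiteGraph α β).neighborSet (inr b) = Set.range inl := by
    ext (a | b') <;> simp
  rw [← card_neighborSet_eq_degree, ← Nat.card_eq_fintype_card, this,
    Nat.card_range_of_injective inl_injective, Nat.card_eq_fintype_card]

section CompleteBipartite

variable {α β : Type*} [Fintype α] [Fintype β] {S : Set (α ⊕ β)}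

lemma card_le_steinerLambda_of_subset_range_inl (hSl : S ⊆ Set.range inl) (hS : S.Nontrivial) :
    Fintype.card β ≤ (completeBipartiteGraph α β).steinerLambda S := by
  classical
  refine card_le_steinerLambda_of_subset_neighborSet inr_injective (fun b ↦ ?_) hS
  rintro _ h
  obtain ⟨a, rfl⟩ := hSl h
  simp

lemma card_le_steinerLambda_of_subset_range_inr (hSr : S ⊆ Set.range inr) (hS : S.Nontrivial) :
    Fintype.card α ≤ (completeBipartiteGraph α β).steinerLambda S := by
  classical
  refine card_le_steinerLambda_of_subset_neighborSet inl_injective (fun a ↦ ?_) hS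
  rintro _ h
  obtain ⟨b, rfl⟩ := hSr h
  simp

end CompleteBipartite

lemma le_steinerLambda_inl_inl_inr {ℓ : ℕ} (a₁ a₂ : Fin ℓ) (b : Fin (ℓ + 1)) :
    ℓ ≤ (completeBipartiteGraph (Fin ℓ) (Fin (ℓ + 1))).steinerLambda {inl a₁, inl a₂, inr b} := by
  classical
  set K := completeBipartiteGraph (Fin ℓ) (Fin (ℓ + 1))
  have hadj : ∀ x y, K.Adj (inl x) (inr y) := by simp [K]
  let T x := K.starSubgraph (inr (b.succAbove x)) {inl a₁, inl a₂, inl x} ⊔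
    K.subgraphOfAdj (hadj x b)
  have hT : ∀ x, K.IsSteinerTree {inl a₁, inl a₂, inr b} (T x) := by
    intro x
    refine ⟨by simp [T, Set.insert_subset_iff], ?_⟩
    refine Subgraph.isTree_coe_sup_subgraphOfAdj (isTree_coe_starSubgraph ?_) _ (by simp) ?_
    · simp [K, Set.insert_subset_iff]
    · simp
  have hdisj : ∀ x y, x ≠ y → Disjoint (T x).edgeSet (T y).edgeSet := fun x y hxy ↦
    Subgraph.disjoint_edgeSet_sup_subgraphOfAdj _ _
      (disjoint_edgeSet_starSubgraph (by simpa using hxy) (by simp) (by simp))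
      (by simp) (by simp) (by simp [hxy])
  simpa using card_le_steinerLambda hT hdisj
    (Set.nontrivial_of_mem_mem_ne (x := inl a₁) (y := inr b) (by simp) (by simp) (by simp))

lemma le_steinerLambda_inl_inr_inr {ℓ : ℕ} (a : Fin ℓ) {b₁ b₂ : Fin (ℓ + 1)} (hb : b₁ ≠ b₂) :
    ℓ ≤ (completeBipartiteGraph (Fin ℓ) (Fin (ℓ + 1))).steinerLambda {inl a, inr b₁, inr b₂} := by
  classical
  obtain ⟨m, rfl⟩ := Nat.exists_eq_add_one_of_ne_zero a.pos.ne'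
  set K := completeBipartiteGraph (Fin (m + 1)) (Fin (m + 1 + 1))
  have hadj : ∀ x y, K.Adj (inr y) (inl x) := by simp [K]
  obtain ⟨b, rfl⟩ := Fin.exists_succAbove_eq hb
  -- `σ` enumerates the right vertices other than `b₁ = b₂.succAbove b` and `b₂`
  let σ (j : Fin m) : Fin (m + 1 + 1) := b₂.succAbove (b.succAbove j)
  let T : Option (Fin m) → K.Subgraph
    | none => K.starSubgraph (inl a) {inr (b₂.succAbove b), inr b₂}
    | some j => K.starSubgraph (inl (a.succAbove j)) {inr (b₂.succAbove b), inr b₂, inr (σ j)} ⊔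
        K.subgraphOfAdj (hadj a (σ j))
  have hT : ∀ i, K.IsSteinerTree {inl a, inr (b₂.succAbove b), inr b₂} (T i) := by
    rintro (_ | j)
    · refine ⟨by simp [T], isTree_coe_starSubgraph ?_⟩
      simp [K, Set.insert_subset_iff]
    · refine ⟨by simp [T, Set.insert_subset_iff], ?_⟩
      refine Subgraph.isTree_coe_sup_subgraphOfAdj (isTree_coe_starSubgraph ?_) _ (by simp) ?_
      · simp [K, Set.insert_subset_iff]
      · simp
  have hstar : ∀ j, Disjoint (T none).edgeSet (T (some j)).edgeSet := by
    intro j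
    simp only [T, Subgraph.edgeSet_sup, edgeSet_subgraphOfAdj, Set.disjoint_union_right,
      Set.disjoint_singleton_right]
    refine ⟨disjoint_edgeSet_starSubgraph (by simp [Fin.ne_succAbove]) (by simp) (by simp), ?_⟩
    simp [σ, Fin.succAbove_ne]
  have hdisj : ∀ i j, i ≠ j → Disjoint (T i).edgeSet (T j).edgeSet := by
    rintro (_ | j) (_ | k) hjk
    · exact absurd rfl hjk
    · exact hstar k
    · exact (hstar j).symm
    · have hjk : j ≠ k := by simpa using hjk
      exact Subgraph.disjoint_edgeSet_sup_subgraphOfAdj _ _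
        (disjoint_edgeSet_starSubgraph (by simpa using hjk) (by simp) (by simp))
        (by simp [Fin.ne_succAbove]) (by simp [Fin.ne_succAbove]) (by simp [σ, hjk])
  simpa using card_le_steinerLambda hT hdisj
    (Set.nontrivial_of_mem_mem_ne (x := inl a) (y := inr b₂) (by simp) (by simp) (by simp))

lemma le_steinerLambda_of_ncard_eq_three {ℓ : ℕ} {S : Set (Fin ℓ ⊕ Fin (ℓ + 1))}
    (hS : S.ncard = 3) : ℓ ≤ (completeBipartiteGraph (Fin ℓ) (Fin (ℓ + 1))).steinerLambda S := by
  have hS' : S.Nontrivial := Set.one_lt_ncard_iff_nontrivial.mp (by omega)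
  obtain ⟨x, y, z, hxy, hxz, hyz, rfl⟩ := Set.ncard_eq_three.mp hS
  rcases x with a₁ | b₁ <;> rcases y with a₂ | b₂ <;> rcases z with a₃ | b₃
  · exact (Nat.le_succ ℓ).trans (by
      simpa using card_le_steinerLambda_of_subset_range_inl (by simp [Set.insert_subset_iff]) hS')
  · exact le_steinerLambda_inl_inl_inr a₁ a₂ b₃
  · rw [Set.pair_comm]
    exact le_steinerLambda_inl_inl_inr a₁ a₃ b₂
  · exact le_steinerLambda_inl_inr_inr a₁ (by simpa using hyz)
  · rw [Set.insert_comm, Set.pair_comm]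
    exact le_steinerLambda_inl_inl_inr a₂ a₃ b₁
  · rw [Set.insert_comm]
    exact le_steinerLambda_inl_inr_inr a₂ (by simpa using hxz)
  · rw [Set.pair_comm, Set.insert_comm, Set.pair_comm]
    exact le_steinerLambda_inl_inr_inr a₃ (by simpa using hxy.symm)
  · simpa using card_le_steinerLambda_of_subset_range_inr (by simp [Set.insert_subset_iff]) hS'

theorem lambda_three_completeBipartite (ℓ : ℕ) (hl : 2 ≤ ℓ) :
    (completeBipartiteGraph (Fin ℓ) (Fin (ℓ + 1))).genEdgeConn 3 = ℓ := by
  classical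
  let b : Fin 3 ↪ Fin (ℓ + 1) := Fin.castLEEmb (by omega)
  have hS₀ : (Set.range (inr ∘ b) : Set (Fin ℓ ⊕ Fin (ℓ + 1))).ncard = 3 := by
    rw [Set.ncard_range_of_injective (inr_injective.comp b.injective), Nat.card_fin]
  refine genEdgeConn_eq hS₀ ?_ fun S hS ↦ le_steinerLambda_of_ncard_eq_three hS
  calc _ ≤ (completeBipartiteGraph (Fin ℓ) (Fin (ℓ + 1))).degree (inr (b 0)) :=
        steinerLambda_le_degree (Set.mem_range_self (f := inr ∘ b) 0)
          (Set.one_lt_ncard_iff_nontrivial.mp (by omega))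
    _ = ℓ := by rw [completeBipartiteGraph_degree_inr, Fintype.card_fin]
end
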